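/- arXiv:math/0312154 — 4 statements merged into one kernel-verified Lean document; each statement's English description precedes it below -/
import Mathlib

section
/- In the ring R of symmetric power series in variables x_1,...,x_r over ℚ, the ideal generated by the top d elementary symmetric functions e_{r-d+1},...,e_r equals R ∩ (x_{r-d+1},...,x_r), where the latter ideal is taken in ℚ[[x_1,...,x_r]]. -/
def IsSymmPS (r : ℕ) (f : MvPowerSeries (Fin r) ℚ) : Prop :=
  ∀ σ : Equiv.Perm (Fin r), ∀ d : Fin r →₀ ℕ,
    MvPowerSeries.coeff (Finsupp.mapDomain σ d) f = MvPowerSeries.coeff d f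

/-!
Put `n = r - d`. A symmetric polynomial is `P(e_1, …, e_r)` for a unique `P`. Killing the
variables `x_{n+1}, …, x_r` sends `e_k` to the `k`-th elementary symmetric polynomial of
`x_1, …, x_n` for `k ≤ n` and to `0` for `k > n`. As `e_1, …, e_n` are algebraically independent
in `n` variables, a symmetric polynomial in the ideal `(x_{n+1}, …, x_r)` has `P` in the ideal
`(Y_{n+1}, …, Y_r)`, i.e. it is a combination of `e_{n+1}, …, e_r` with symmetric coefficients.

A symmetric power series `f` in the ideal is treated degree by degree: each truncation of `f` is
such a polynomial, and since `e_k` is homogeneous of degree `k`, the degree `N` part of the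
coefficient of `e_k` may be read off the decomposition of the truncation at degree `N + k`.
-/

open Finset

theorem Ideal.exists_eq_sum_mul_of_mem_span_image {R α : Type*} [CommSemiring R] {v : α → R}
    {s : Finset α} {x : R} (hx : x ∈ Ideal.span (v '' s)) :
    ∃ c : α → R, x = ∑ i ∈ s, c i * v i := by
  obtain ⟨l, hl, rfl⟩ := (Finsupp.mem_span_image_iff_linearCombination R).mp hx
  exact ⟨l, Finsupp.linearCombination_apply_of_mem_supported R hl⟩

namespace MvPolynomial

section CommSemiring

variable {R σ τ : Type*} [CommSemiring R]

theorem isSymmetric_iff_coeff_mapDomain {p : MvPolynomial σ R} :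
    p.IsSymmetric ↔ ∀ (e : Equiv.Perm σ) (d : σ →₀ ℕ), coeff (d.mapDomain e) p = coeff d p := by
  refine forall_congr' fun e => ⟨fun h d => ?_, fun h => ?_⟩
  · simpa [h] using coeff_rename_mapDomain e e.injective p d
  · ext m
    obtain ⟨d, rfl⟩ := Finsupp.mapDomain_surjective e.surjective m
    rw [coeff_rename_mapDomain e e.injective, h]

theorem isHomogeneous_esymm [Fintype σ] (k : ℕ) : (esymm σ R k).IsHomogeneous k := by
  refine IsHomogeneous.sum _ _ _ fun t ht => ?_
  have := IsHomogeneous.prod t (fun i => (X i : MvPolynomial σ R)) (fun _ => 1)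
    fun i _ => isHomogeneous_X R i
  simpa [(mem_powersetCard.mp ht).2] using this

theorem esymm_eq_zero_of_card_lt [Fintype σ] {k : ℕ} (h : Fintype.card σ < k) :
    esymm σ R k = 0 := by
  rw [esymm, powersetCard_eq_empty.mpr (by simpa using h), sum_empty]

section killCompl

variable {f : σ → τ} (hf : Function.Injective f)

theorem killCompl_X_of_notMem_range {i : τ} (hi : i ∉ Set.range f) :
    killCompl (R := R) hf (X i) = 0 := by
  rw [killCompl, aeval_X, dif_neg hi]

theorem killCompl_X_apply (j : σ) : killCompl (R := R) hf (X (f j)) = X j := by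
  simpa using killCompl_rename_app hf (X (R := R) j)

theorem killCompl_esymm [Fintype σ] [Fintype τ] (k : ℕ) :
    killCompl hf (esymm τ R k) = esymm σ R k := by
  let fe : σ ↪ τ := ⟨f, hf⟩
  rw [esymm, map_sum, ← sum_subset (powersetCard_mono (subset_univ (univ.map fe)))]
  · rw [powersetCard_map, sum_map, esymm]
    refine sum_congr rfl fun u _ => ?_
    simp [fe, map_prod, killCompl_X_apply]
  · intro t ht hnt
    have hsub : ¬t ⊆ univ.map fe := fun h =>
      hnt (mem_powersetCard.mpr ⟨h, (mem_powersetCard.mp ht).2⟩)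
    obtain ⟨i, hit, hi⟩ := not_subset.mp hsub
    replace hi : i ∉ Set.range f := by simpa [fe] using hi
    rw [map_prod]
    exact prod_eq_zero hit (killCompl_X_of_notMem_range hf hi)

theorem killCompl_eq_zero_iff {p : MvPolynomial τ R} :
    killCompl hf p = 0 ↔ p ∈ Ideal.span (X '' (Set.range f)ᶜ) := by
  rw [mem_ideal_span_X_image]
  constructor
  · intro h m hm
    by_contra! hsub
    have hm' : m = (m.comapDomain f hf.injOn).mapDomain f :=
      (Finsupp.mapDomain_comapDomain f hf m fun i hi => by
        by_contra hr
        exact Finsupp.mem_support_iff.mp hi (hsub i hr)).symm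
    rw [mem_support_iff, hm', ← coeff_killCompl hf, h, coeff_zero] at hm
    exact hm rfl
  · intro h
    ext s
    rw [coeff_killCompl, coeff_zero]
    by_contra hs
    obtain ⟨i, hi, hsi⟩ := h _ (mem_support_iff.mpr hs)
    exact hsi (Finsupp.mapDomain_of_notMem_range _ _ hi)

end killCompl

end CommSemiring

section CommRing

variable {R : Type*} [CommRing R]

theorem aeval_esymm_injective (n : ℕ) :
    Function.Injective (aeval (R := R) fun i : Fin n => esymm (Fin n) R (i + 1)) := fun P Q h =>
  esymmAlgHom_fin_injective R le_rfl (Subtype.ext (by simpa only [esymmAlgHom_apply] using h))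

theorem killCompl_castLE_aeval_esymm {n r : ℕ} (h : n ≤ r) (P : MvPolynomial (Fin r) R) :
    killCompl (Fin.castLE_injective h) (aeval (fun i : Fin r => esymm (Fin r) R (i + 1)) P) =
      aeval (fun i : Fin n => esymm (Fin n) R (i + 1)) (killCompl (Fin.castLE_injective h) P) := by
  rw [← AlgHom.comp_apply, ← AlgHom.comp_apply]
  congr 1
  refine algHom_ext fun i => ?_
  simp only [AlgHom.comp_apply, aeval_X, killCompl_esymm]
  by_cases hi : (i : ℕ) < n
  · obtain ⟨j, rfl⟩ : ∃ j : Fin n, Fin.castLE h j = i := ⟨⟨i, hi⟩, rfl⟩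
    rw [killCompl_X_apply, aeval_X, Fin.val_castLE]
  · rw [killCompl_X_of_notMem_range _ (by simpa [Fin.range_castLE] using hi), map_zero,
      esymm_eq_zero_of_card_lt (by rw [Fintype.card_fin]; omega)]

theorem exists_eq_sum_esymm_mul_of_mem_span_X {n r : ℕ} (h : n ≤ r) {p : MvPolynomial (Fin r) R}
    (hp : p.IsSymmetric) (hpJ : p ∈ Ideal.span (X '' (Set.range (Fin.castLE h))ᶜ)) :
    ∃ q : ℕ → MvPolynomial (Fin r) R, (∀ k, (q k).IsSymmetric) ∧
      p = ∑ k ∈ Icc (n + 1) r, esymm (Fin r) R k * q k := by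
  set E := aeval (R := R) fun i : Fin r => esymm (Fin r) R (i + 1)
  have hE : ∀ P, (E P).IsSymmetric := fun P => by
    rw [← esymmAlgHom_apply]
    exact (esymmAlgHom (Fin r) R r P).2
  obtain ⟨P, rfl⟩ : ∃ P, E P = p := by
    obtain ⟨P, hP⟩ := (esymmAlgHom_fin_bijective R r).2 ⟨p, hp⟩
    exact ⟨P, by rw [← esymmAlgHom_apply, hP]⟩
  have hPk : killCompl (Fin.castLE_injective h) P = 0 := aeval_esymm_injective n (by
    rw [← killCompl_castLE_aeval_esymm, (killCompl_eq_zero_iff _).mpr hpJ, map_zero])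
  set s := univ.filter fun i : Fin r => n ≤ (i : ℕ)
  have hs : (Set.range (Fin.castLE h))ᶜ = s := by
    ext i
    simp [s, Fin.range_castLE]
  obtain ⟨c, rfl⟩ := Ideal.exists_eq_sum_mul_of_mem_span_image
    (hs ▸ (killCompl_eq_zero_iff _).mp hPk)
  refine ⟨fun k => E (∑ i ∈ s with i.val + 1 = k, c i), fun k => hE _, ?_⟩
  have hmaps : ∀ i ∈ s, (i : ℕ) + 1 ∈ Icc (n + 1) r := fun i hi => by
    simp only [s, mem_filter, mem_Icc] at hi ⊢
    omega
  simp_rw [map_sum, map_mul, E, aeval_X, mul_sum]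
  rw [← sum_fiberwise_of_maps_to hmaps]
  refine sum_congr rfl fun k _ => sum_congr rfl fun i hi => ?_
  rw [(mem_filter.mp hi).2, mul_comm]

end CommRing

end MvPolynomial

namespace MvPowerSeries

variable {σ R : Type*} [CommSemiring R]

theorem coeff_eq_zero_of_mem_span_X_image {s : Set σ} {f : MvPowerSeries σ R}
    (hf : f ∈ Ideal.span (X '' s)) {m : σ →₀ ℕ} (hm : ∀ i ∈ s, m i = 0) : coeff m f = 0 := by
  classical
  induction hf using Submodule.span_induction generalizing m with
  | mem x hx =>
    obtain ⟨i, hi, rfl⟩ := hx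
    rw [coeff_X, if_neg]
    rintro rfl
    exact absurd (hm i hi) (by simp)
  | zero => simp
  | add x y _ _ hx hy => rw [map_add, hx hm, hy hm, add_zero]
  | smul a x _ hx =>
    rw [smul_eq_mul, coeff_mul]
    refine sum_eq_zero fun p hp => ?_
    rw [hx fun i hi => ?_, mul_zero]
    have := congrArg (· i) (mem_antidiagonal.mp hp)
    simp only [Finsupp.coe_add, Pi.add_apply, hm i hi, Nat.add_eq_zero_iff] at this
    exact this.2

theorem truncTotal_mem_span_X_image [Finite σ] {s : Set σ} {f : MvPowerSeries σ R}
    (hf : f ∈ Ideal.span (X '' s)) (N : ℕ) :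
    truncTotal N f ∈ Ideal.span (MvPolynomial.X '' s) := by
  rw [MvPolynomial.mem_ideal_span_X_image]
  intro m hm
  by_contra! h
  apply MvPolynomial.mem_support_iff.mp hm
  rw [coeff_truncTotal_eq_ite, coeff_eq_zero_of_mem_span_X_image hf h, ite_self]

theorem coe_mem_span_X_image {s : Set σ} {p : MvPolynomial σ R}
    (hp : p ∈ Ideal.span (MvPolynomial.X '' s)) :
    (p : MvPowerSeries σ R) ∈ Ideal.span (X '' s) := by
  have := Ideal.mem_map_of_mem MvPolynomial.coeToMvPowerSeries.ringHom hp
  rw [Ideal.map_span, Set.image_image] at this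
  simpa only [MvPolynomial.coeToMvPowerSeries.ringHom_apply, MvPolynomial.coe_X] using this

noncomputable def ofDegreewise (q : ℕ → MvPolynomial σ R) : MvPowerSeries σ R :=
  fun m => MvPolynomial.coeff m (q m.degree)

@[simp]
theorem coeff_ofDegreewise (q : ℕ → MvPolynomial σ R) (m : σ →₀ ℕ) :
    coeff m (ofDegreewise q) = MvPolynomial.coeff m (q m.degree) :=
  rfl

theorem coeff_coe_mul_ofDegreewise {a : MvPolynomial σ R} {e : ℕ} (ha : a.IsHomogeneous e)
    (q : ℕ → MvPolynomial σ R) (m : σ →₀ ℕ) :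
    coeff m ((a : MvPowerSeries σ R) * ofDegreewise fun N => q (N + e)) =
      MvPolynomial.coeff m (a * q m.degree) := by
  classical
  rw [coeff_mul, MvPolynomial.coeff_mul]
  refine sum_congr rfl fun x hx => ?_
  rw [MvPolynomial.coeff_coe]
  by_cases h0 : MvPolynomial.coeff x.1 a = 0
  · rw [h0, zero_mul, zero_mul]
  · have hx1 : x.1.degree = e := by
      by_contra hne
      exact h0 (ha.coeff_eq_zero hne)
    rw [coeff_ofDegreewise, ← mem_antidiagonal.mp hx, map_add, hx1, add_comm e]

end MvPowerSeries

open MvPolynomial MvPowerSeries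

theorem isSymmPS_ofDegreewise {r : ℕ} {q : ℕ → MvPolynomial (Fin r) ℚ}
    (hq : ∀ N, (q N).IsSymmetric) : IsSymmPS r (ofDegreewise q) := fun e m => by
  simp only [coeff_ofDegreewise, Finsupp.degree_mapDomain]
  exact isSymmetric_iff_coeff_mapDomain.mp (hq _) e m

theorem IsSymmPS.isSymmetric_truncTotal {r : ℕ} {f : MvPowerSeries (Fin r) ℚ}
    (hf : IsSymmPS r f) (N : ℕ) : (truncTotal N f).IsSymmetric :=
  isSymmetric_iff_coeff_mapDomain.mpr fun e m => by
    simp only [coeff_truncTotal_eq_ite, Finsupp.degree_mapDomain, hf e m]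

theorem stmt3_general (r d : ℕ) (f : MvPowerSeries (Fin r) ℚ) (hf : IsSymmPS r f) :
    f ∈ Ideal.span {g : MvPowerSeries (Fin r) ℚ |
        ∃ i : Fin r, r - d ≤ (i : ℕ) ∧ g = MvPowerSeries.X i}
    ↔ ∃ g : ℕ → MvPowerSeries (Fin r) ℚ, (∀ k, IsSymmPS r (g k)) ∧
        f = ∑ k ∈ Finset.Icc (r - d + 1) r,
          (↑(MvPolynomial.esymm (Fin r) ℚ k) : MvPowerSeries (Fin r) ℚ) * g k := by
  have h : r - d ≤ r := Nat.sub_le r d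
  have hS : {g : MvPowerSeries (Fin r) ℚ | ∃ i : Fin r, r - d ≤ (i : ℕ) ∧ g = MvPowerSeries.X i}
      = MvPowerSeries.X '' (Set.range (Fin.castLE h))ᶜ := by
    ext g
    simp [Fin.range_castLE, eq_comm]
  rw [hS]
  constructor
  · intro hfJ
    choose q hq_symm hq_eq using fun N => exists_eq_sum_esymm_mul_of_mem_span_X h
      (hf.isSymmetric_truncTotal (N + 1)) (truncTotal_mem_span_X_image hfJ (N + 1))
    refine ⟨fun k => ofDegreewise fun N => q (N + k) k,
      fun k => isSymmPS_ofDegreewise fun N => hq_symm _ k, ?_⟩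
    ext m
    rw [← coeff_truncTotal (n := m.degree + 1) f (Nat.lt_succ_self _), hq_eq, map_sum,
      MvPolynomial.coeff_sum]
    exact sum_congr rfl fun k _ =>
      (coeff_coe_mul_ofDegreewise (isHomogeneous_esymm k) (fun N => q N k) m).symm
  · rintro ⟨g, -, rfl⟩
    refine Ideal.sum_mem _ fun k hk => Ideal.mul_mem_right _ _ (coe_mem_span_X_image ?_)
    rw [← killCompl_eq_zero_iff (Fin.castLE_injective h), killCompl_esymm,
      esymm_eq_zero_of_card_lt]
    rw [Fintype.card_fin]
    exact (mem_Icc.mp hk).1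

theorem stmt3 (r d : ℕ) (hd : d ≤ r) (f : MvPowerSeries (Fin r) ℚ) (hf : IsSymmPS r f) :
    f ∈ Ideal.span {g : MvPowerSeries (Fin r) ℚ |
        ∃ i : Fin r, r - d ≤ (i : ℕ) ∧ g = MvPowerSeries.X i}
    ↔ ∃ g : ℕ → MvPowerSeries (Fin r) ℚ, (∀ k, IsSymmPS r (g k)) ∧
        f = ∑ k ∈ Finset.Icc (r - d + 1) r,
          (↑(MvPolynomial.esymm (Fin r) ℚ k) : MvPowerSeries (Fin r) ℚ) * g k :=
  stmt3_general r d f hf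
end

section
/- Let 𝔱 be a finite-dimensional real vector space, h a positive definite symmetric bilinear form on 𝔱, H_V a symmetric bilinear form, and β_1,...,β_m nonzero linear functionals on 𝔱 whose zero sets bound an open chamber C. Then for sufficiently small real s, the function ζ ↦ (1/2)[h(ζ,ζ) + s·H_V(ζ,ζ)] - Σ_j log|β_j(ζ)| attains a minimum at some interior point of C, and at any critical point the Hessian h + s·H_V + Σ_j β_j ⊗ β_j / β_j(ζ)^2 is positive definite. -/
/-!
For small `|s|` the form `h + s H_V` stays coercive, `ε ‖ζ‖² ≤ h ζ ζ + s H_V ζ ζ`, because the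
perturbation is bounded by a multiple of `‖ζ‖²`; the Hessian adds a sum of squares to this form, so
it is positive definite everywhere on `C`. For the minimum, `log |β_j ζ| ≤ ‖β_j‖ ‖ζ‖`, so with
`N = ∑ ‖β_j‖` the objective is at least `ε/2 ‖ζ‖² - N ‖ζ‖` and at least `-log β_j ζ - N ‖ζ‖`:
it grows without bound both at infinity and near the walls of `C`, hence exceeds its value at a
given point outside a compact subset of `C`, on which it attains its minimum.
-/

open Real Set Metric

theorem IsCompact.exists_isMinOn_of_forall_lt_of_subset {α β : Type*} [LinearOrder α]
    [TopologicalSpace α] [ClosedIicTopology α] [TopologicalSpace β] {f : β → α} {s K : Set β}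
    {x₀ : β} (hK : IsCompact K) (hKs : K ⊆ s) (hf : ContinuousOn f K) (hx₀ : x₀ ∈ s)
    (hout : ∀ x ∈ s \ K, f x₀ < f x) : ∃ x ∈ s, IsMinOn f s x := by
  have hx₀K : x₀ ∈ K := by_contra fun h => lt_irrefl _ (hout x₀ ⟨hx₀, h⟩)
  obtain ⟨x, hxK, hmin⟩ := hK.exists_isMinOn ⟨x₀, hx₀K⟩ hf
  refine ⟨x, hKs hxK, fun y hy => ?_⟩
  by_cases hyK : y ∈ K
  · exact hmin hyK
  · exact (hmin hx₀K).trans (hout y ⟨hy, hyK⟩).le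

theorem exists_forall_lt_mul_sq_sub_mul {c : ℝ} (hc : 0 < c) (N a : ℝ) :
    ∃ R, ∀ t, R < t → a < c * t ^ 2 - N * t := by
  refine ⟨max 1 ((|N| + |a| + 1) / c), fun t ht => ?_⟩
  have ht₁ : 1 < t := (le_max_left _ _).trans_lt ht
  have hct : |N| + |a| + 1 < c * t := by
    rw [← div_lt_iff₀' hc]
    exact (le_max_right _ _).trans_lt ht
  have hgap : |a| + 1 < c * t - N := by linarith [le_abs_self N]
  have hprod : 0 < (t - 1) * (c * t - N) := mul_pos (by linarith) (by linarith [abs_nonneg a])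
  nlinarith [le_abs_self a]

theorem LinearMap.apply_smul_smul_self {R M : Type*} [CommRing R] [AddCommGroup M] [Module R M]
    (B : M →ₗ[R] M →ₗ[R] R) (t : R) (x : M) : B (t • x) (t • x) = t ^ 2 * B x x := by
  simp only [map_smul, LinearMap.smul_apply, smul_eq_mul]
  ring

section FiniteDimensional

variable {E : Type*} [NormedAddCommGroup E] [NormedSpace ℝ E] [FiniteDimensional ℝ E]

theorem LinearMap.continuous_apply_self (B : E →ₗ[ℝ] E →ₗ[ℝ] ℝ) : Continuous fun x => B x x :=
  B.toContinuousBilinearMap.continuous.clm_apply continuous_id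

theorem LinearMap.exists_forall_abs_apply_self_le (B : E →ₗ[ℝ] E →ₗ[ℝ] ℝ) :
    ∃ K, 0 ≤ K ∧ ∀ x, |B x x| ≤ K * ‖x‖ ^ 2 :=
  ⟨‖B.toContinuousBilinearMap‖, by positivity, fun x => by
    simpa [sq, mul_assoc] using B.toContinuousBilinearMap.le_opNorm₂ x x⟩

theorem LinearMap.exists_forall_mul_sq_norm_le_apply_self (B : E →ₗ[ℝ] E →ₗ[ℝ] ℝ)
    (hB : ∀ x, x ≠ 0 → 0 < B x x) : ∃ c > 0, ∀ x, c * ‖x‖ ^ 2 ≤ B x x := by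
  obtain ⟨c, hc, hcB⟩ := (isCompact_sphere (0 : E) 1).exists_forall_le'
    B.continuous_apply_self.continuousOn fun u hu =>
      hB u (ne_zero_of_mem_unit_sphere ⟨u, hu⟩)
  refine ⟨c, hc, fun x => ?_⟩
  rcases eq_or_ne x 0 with rfl | hx
  · simp
  have hxpos : 0 < ‖x‖ := norm_pos_iff.mpr hx
  have hu : ‖x‖⁻¹ • x ∈ sphere (0 : E) 1 := by
    simp [norm_smul, hxpos.ne']
  have hx_eq : x = ‖x‖ • ‖x‖⁻¹ • x := by
    rw [smul_smul, mul_inv_cancel₀ hxpos.ne', one_smul]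
  calc c * ‖x‖ ^ 2 ≤ ‖x‖ ^ 2 * B (‖x‖⁻¹ • x) (‖x‖⁻¹ • x) := by
        rw [mul_comm]; exact mul_le_mul_of_nonneg_left (hcB _ hu) (sq_nonneg _)
    _ = B x x := by rw [← B.apply_smul_smul_self, ← hx_eq]

theorem LinearMap.exists_forall_mul_sq_norm_le_apply_self_add_smul (B Q : E →ₗ[ℝ] E →ₗ[ℝ] ℝ)
    (hB : ∀ x, x ≠ 0 → 0 < B x x) :
    ∃ ε > 0, ∀ s : ℝ, |s| < ε → ∀ x, ε * ‖x‖ ^ 2 ≤ B x x + s * Q x x := by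
  obtain ⟨c, hc, hcB⟩ := B.exists_forall_mul_sq_norm_le_apply_self hB
  obtain ⟨K, hK, hKQ⟩ := Q.exists_forall_abs_apply_self_le
  have hε : 0 < c / (K + 1) := by positivity
  refine ⟨c / (K + 1), hε, fun s hs x => ?_⟩
  have hc_eq : c = c / (K + 1) * (K + 1) := by field_simp
  have hsQ : -(|s| * (K * ‖x‖ ^ 2)) ≤ s * Q x x := by
    have := mul_le_mul_of_nonneg_left (hKQ x) (abs_nonneg s)
    rw [← abs_mul] at this
    linarith [neg_abs_le (s * Q x x)]
  have hsK : |s| * K ≤ c / (K + 1) * K := mul_le_mul_of_nonneg_right hs.le hK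
  nlinarith [hcB x, sq_nonneg ‖x‖]

end FiniteDimensional

section LogBarrier

variable {E : Type*} [NormedAddCommGroup E] [NormedSpace ℝ E] {ι : Type*} [Fintype ι]

theorem ContinuousLinearMap.log_abs_apply_le (β : E →L[ℝ] ℝ) (x : E) :
    log |β x| ≤ ‖β‖ * ‖x‖ := by
  have := β.le_opNorm x
  rw [Real.norm_eq_abs] at this
  exact (log_le_self (abs_nonneg _)).trans this

theorem sum_log_abs_apply_le (β : ι → E →L[ℝ] ℝ) (x : E) :
    ∑ i, log |β i x| ≤ (∑ i, ‖β i‖) * ‖x‖ := by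
  rw [Finset.sum_mul]
  exact Finset.sum_le_sum fun i _ => (β i).log_abs_apply_le x

theorem sum_log_abs_apply_le_log_abs_add (β : ι → E →L[ℝ] ℝ) (x : E) (j : ι) :
    ∑ i, log |β i x| ≤ log |β j x| + (∑ i, ‖β i‖) * ‖x‖ := by
  classical
  rw [← Finset.add_sum_erase _ _ (Finset.mem_univ j), Finset.sum_mul]
  gcongr
  calc ∑ i ∈ Finset.univ.erase j, log |β i x|
      ≤ ∑ i ∈ Finset.univ.erase j, ‖β i‖ * ‖x‖ :=
        Finset.sum_le_sum fun i _ => (β i).log_abs_apply_le x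
    _ ≤ ∑ i, ‖β i‖ * ‖x‖ :=
        Finset.sum_le_sum_of_subset_of_nonneg (Finset.erase_subset _ _)
          fun i _ _ => by positivity

theorem exists_isMinOn_half_mul_sub_sum_log_abs [ProperSpace E] {q : E → ℝ} (hq : Continuous q)
    {c : ℝ} (hc : 0 < c) (hqc : ∀ x, c * ‖x‖ ^ 2 ≤ q x) (β : ι → E →L[ℝ] ℝ)
    (hC : {x | ∀ j, 0 < β j x}.Nonempty) :
    ∃ ζ ∈ {x | ∀ j, 0 < β j x},
      IsMinOn (fun x => 1 / 2 * q x - ∑ j, log |β j x|) {x | ∀ j, 0 < β j x} ζ := by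
  set C := {x | ∀ j, 0 < β j x}
  set f := fun x => 1 / 2 * q x - ∑ j, log |β j x|
  set N := ∑ j, ‖β j‖
  obtain ⟨x₀, hx₀⟩ := hC
  obtain ⟨R, hR⟩ := exists_forall_lt_mul_sq_sub_mul (half_pos hc) N (f x₀)
  set δ := exp (-(f x₀ + N * R))
  have far : ∀ x, R < ‖x‖ → f x₀ < f x := fun x hx => calc
    f x₀ < c / 2 * ‖x‖ ^ 2 - N * ‖x‖ := hR _ hx
    _ ≤ f x := by
      have := hqc x
      have : ∑ j, log |β j x| ≤ N * ‖x‖ := sum_log_abs_apply_le β x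
      show _ ≤ 1 / 2 * q x - ∑ j, log |β j x|
      linarith
  have near : ∀ x ∈ C, ‖x‖ ≤ R → ∀ j, β j x < δ → f x₀ < f x := by
    intro x hx hxR j hj
    have hlog : log |β j x| < -(f x₀ + N * R) := by
      rw [abs_of_pos (hx j), ← log_exp (-(f x₀ + N * R))]
      exact log_lt_log (hx j) hj
    have : ∑ i, log |β i x| ≤ log |β j x| + N * ‖x‖ :=
      sum_log_abs_apply_le_log_abs_add β x j
    have : 0 ≤ q x := (by positivity : 0 ≤ c * ‖x‖ ^ 2).trans (hqc x)
    have : N * ‖x‖ ≤ N * R := mul_le_mul_of_nonneg_left hxR (by positivity)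
    show f x₀ < 1 / 2 * q x - ∑ i, log |β i x|
    linarith
  have hf : ContinuousOn f C :=
    (continuous_const.mul hq).continuousOn.sub <| continuousOn_finsetSum _ fun j _ =>
      (β j).continuous.abs.continuousOn.log fun x hx => abs_ne_zero.mpr (hx j).ne'
  set K := closedBall 0 R ∩ {x | ∀ j, δ ≤ β j x}
  have hK : IsCompact K := by
    refine (isCompact_closedBall 0 R).inter_right ?_
    simp only [ofPred_forall]
    exact isClosed_iInter fun j => isClosed_le continuous_const (β j).continuous
  have hKC : K ⊆ C := fun x hx j => (exp_pos _).trans_le (hx.2 j)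
  refine hK.exists_isMinOn_of_forall_lt_of_subset hKC (hf.mono hKC) hx₀ ?_
  rintro x ⟨hx, hxK⟩
  rcases lt_or_ge R ‖x‖ with hxR | hxR
  · exact far x hxR
  · have : ¬∀ j, δ ≤ β j x := fun h => hxK ⟨mem_closedBall_zero_iff.mpr hxR, h⟩
    obtain ⟨j, hj⟩ := by simpa only [not_forall, not_le] using this
    exact near x hx hxR j hj

end LogBarrier

theorem stmt7_general (l m : ℕ)
    (h HV : EuclideanSpace ℝ (Fin l) →ₗ[ℝ] EuclideanSpace ℝ (Fin l) →ₗ[ℝ] ℝ)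
    (hpos : ∀ x, x ≠ 0 → 0 < h x x)
    (β : Fin m → (EuclideanSpace ℝ (Fin l) →ₗ[ℝ] ℝ))
    (C : Set (EuclideanSpace ℝ (Fin l))) (hC : C = {ζ | ∀ j, 0 < β j ζ})
    (hCne : C.Nonempty) :
    ∃ ε > 0, ∀ s : ℝ, |s| < ε →
      (∃ ζ ∈ C, IsMinOn
          (fun ζ => (1 / 2) * (h ζ ζ + s * HV ζ ζ) - ∑ j, Real.log |β j ζ|) C ζ) ∧
      ∀ ζ ∈ C,
        fderiv ℝ (fun ζ => (1 / 2) * (h ζ ζ + s * HV ζ ζ) - ∑ j, Real.log |β j ζ|) ζ = 0 →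
        ∀ ξ, ξ ≠ 0 → 0 < h ξ ξ + s * HV ξ ξ + ∑ j, (β j ξ) ^ 2 / (β j ζ) ^ 2 := by
  obtain ⟨ε, hε, hcoercive⟩ := h.exists_forall_mul_sq_norm_le_apply_self_add_smul HV hpos
  refine ⟨ε, hε, fun s hs => ⟨?_, fun ζ _ _ ξ hξ => ?_⟩⟩
  · subst hC
    simpa only [LinearMap.coe_toContinuousLinearMap'] using
      exists_isMinOn_half_mul_sub_sum_log_abs (q := fun ζ => h ζ ζ + s * HV ζ ζ)
        (h.continuous_apply_self.add (continuous_const.mul HV.continuous_apply_self)) hε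
        (hcoercive s hs) (fun j => LinearMap.toContinuousLinearMap (β j)) hCne
  · have hsq : 0 < ε * ‖ξ‖ ^ 2 := by positivity
    have hsum : 0 ≤ ∑ j, (β j ξ) ^ 2 / (β j ζ) ^ 2 := by positivity
    linarith [hcoercive s hs ξ]

theorem stmt7 (l m : ℕ)
    (h HV : EuclideanSpace ℝ (Fin l) →ₗ[ℝ] EuclideanSpace ℝ (Fin l) →ₗ[ℝ] ℝ)
    (hsymm : ∀ x y, h x y = h y x) (hpos : ∀ x, x ≠ 0 → 0 < h x x)
    (HVsymm : ∀ x y, HV x y = HV y x)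
    (β : Fin m → (EuclideanSpace ℝ (Fin l) →ₗ[ℝ] ℝ)) (hβ : ∀ j, β j ≠ 0)
    (C : Set (EuclideanSpace ℝ (Fin l))) (hC : C = {ζ | ∀ j, 0 < β j ζ})
    (hCne : C.Nonempty) :
    ∃ ε > 0, ∀ s : ℝ, |s| < ε →
      (∃ ζ ∈ C, IsMinOn
          (fun ζ => (1 / 2) * (h ζ ζ + s * HV ζ ζ) - ∑ j, Real.log |β j ζ|) C ζ) ∧
      ∀ ζ ∈ C,
        fderiv ℝ (fun ζ => (1 / 2) * (h ζ ζ + s * HV ζ ζ) - ∑ j, Real.log |β j ζ|) ζ = 0 →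
        ∀ ξ, ξ ≠ 0 → 0 < h ξ ξ + s * HV ξ ξ + ∑ j, (β j ξ) ^ 2 / (β j ζ) ^ 2 :=
  stmt7_general l m h HV hpos β C hC hCne
end

section
/- Let 𝔱 be a Euclidean space with positive definite form h, let c be a positive semi-definite symmetric form, and suppose Σ_α α ⊗ α = -2c where the sum is over a finite set of linear functionals α paired with complex values e^α(f) of modulus 1 (roots evaluated at a unitary torus element f). If h > c (i.e. h - c is positive definite), s is sufficiently small, t ∈ (-1, 0], and H_V is any fixed symmetric bilinear form, then the complex bilinear form H = (h+c) + s·H_V + t·Σ_α (e^α(f)/(1 + t·e^α(f)))·α⊗α is non-degenerate. -/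
/-!
Taking the real part of `H(ξ, ξ)` and using `Re (z / (1 + t z)) ≥ -1` for `|z| = 1`,
`t ∈ [-1, 0]`, the root terms contribute at least `-∑ aⱼ(ξ)² = -2 c(ξ, ξ)`, so
`Re H(ξ, ξ) ≥ (h - c)(ξ, ξ) + s H_V(ξ, ξ)`. For small `|s|` the right side is positive
definite, because `h - c` is coercive on the finite-dimensional space and `H_V` is bounded
by a multiple of `‖ξ‖²`; hence `H(ξ, ·) = 0` forces `ξ = 0`.
-/

open Finset

theorem Complex.neg_one_le_re_div_one_add_ofReal_mul {z : ℂ} (hz : ‖z‖ = 1) {t : ℝ}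
    (ht₁ : -1 ≤ t) (ht₀ : t ≤ 0) : -1 ≤ (z / (1 + t * z)).re := by
  rcases eq_or_ne (1 + t * z) 0 with h0 | h0
  · simp [h0]
  have hN : 0 < Complex.normSq (1 + t * z) := Complex.normSq_pos.2 h0
  have hz2 : z.re * z.re + z.im * z.im = 1 := by
    rw [← Complex.normSq_apply, Complex.normSq_eq_norm_sq, hz, one_pow]
  obtain ⟨hre₀, hre₁⟩ := abs_le.1 (hz ▸ Complex.abs_re_le_norm z)
  rw [Complex.div_re, ← add_div, le_div_iff₀ hN]
  simp only [Complex.normSq_apply, Complex.add_re, Complex.add_im, Complex.mul_re,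
    Complex.mul_im, Complex.ofReal_re, Complex.ofReal_im, Complex.one_re, Complex.one_im]
  -- the claim is now `(1 + 2t) x + 1 + t + t² ≥ 0` for `x = re z ∈ [-1, 1]`: affine in `x`,
  -- with values `t (t - 1) ≥ 0` and `(t + 1) (t + 2) ≥ 0` at `x = ∓1`
  nlinarith [mul_nonneg (sub_nonneg.2 hre₁)
      (mul_nonneg (neg_nonneg.2 ht₀) (by linarith : (0 : ℝ) ≤ 1 - t)),
    mul_nonneg (neg_le_iff_add_nonneg.1 hre₀)
      (mul_nonneg (neg_le_iff_add_nonneg.1 ht₁) (by linarith : (0 : ℝ) ≤ 2 + t))]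

theorem neg_sum_sq_le_neg_mul_sum_mul_sq {ι : Type*} (s : Finset ι) {t : ℝ}
    (ht₁ : -1 ≤ t) (ht₀ : t ≤ 0) {w x : ι → ℝ} (hw : ∀ i ∈ s, -1 ≤ w i) :
    -∑ i ∈ s, x i ^ 2 ≤ -t * ∑ i ∈ s, w i * x i ^ 2 := by
  rw [← sum_neg_distrib, mul_sum]
  refine sum_le_sum fun i hi => ?_
  nlinarith [mul_le_mul_of_nonneg_left (hw i hi)
      (mul_nonneg (neg_nonneg.2 ht₀) (sq_nonneg (x i))),
    sq_nonneg (x i)]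

namespace LinearMap

variable {E : Type*} [NormedAddCommGroup E] [NormedSpace ℝ E] [FiniteDimensional ℝ E]

theorem continuous_apply_self_s8 (B : E →ₗ[ℝ] E →ₗ[ℝ] ℝ) : Continuous fun x => B x x :=
  B.toContinuousBilinearMap.continuous₂.comp (continuous_id.prodMk continuous_id)

theorem exists_pos_mul_sq_norm_le_apply_self (B : E →ₗ[ℝ] E →ₗ[ℝ] ℝ)
    (hB : ∀ x, x ≠ 0 → 0 < B x x) : ∃ δ > 0, ∀ x, δ * ‖x‖ ^ 2 ≤ B x x := by
  obtain ⟨δ, hδ, hsphere⟩ := (isCompact_sphere (0 : E) 1).exists_forall_le'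
    B.continuous_apply_self_s8.continuousOn fun u hu =>
      hB u (ne_zero_of_mem_unit_sphere (⟨u, hu⟩ : Metric.sphere (0 : E) 1))
  refine ⟨δ, hδ, fun x => ?_⟩
  rcases eq_or_ne x 0 with rfl | hx
  · simp
  have hnx : ‖x‖ ≠ 0 := norm_ne_zero_iff.2 hx
  have hu : ‖x‖⁻¹ • x ∈ Metric.sphere (0 : E) 1 := by
    simp [norm_smul, hnx]
  have hscale : B x x = ‖x‖ ^ 2 * B (‖x‖⁻¹ • x) (‖x‖⁻¹ • x) := by
    simp only [map_smul, smul_apply, smul_eq_mul]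
    field_simp
  rw [hscale, mul_comm δ]
  exact mul_le_mul_of_nonneg_left (hsphere _ hu) (sq_nonneg _)

theorem exists_abs_apply_self_le_mul_sq_norm (P : E →ₗ[ℝ] E →ₗ[ℝ] ℝ) :
    ∃ M ≥ 0, ∀ x, |P x x| ≤ M * ‖x‖ ^ 2 :=
  ⟨‖P.toContinuousBilinearMap‖, by positivity, fun x => by
    simpa [sq, mul_assoc] using P.toContinuousBilinearMap.le_opNorm₂ x x⟩

theorem exists_pos_apply_self_add_mul_of_pos (B P : E →ₗ[ℝ] E →ₗ[ℝ] ℝ)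
    (hB : ∀ x, x ≠ 0 → 0 < B x x) :
    ∃ ε > 0, ∀ s : ℝ, |s| < ε → ∀ x, x ≠ 0 → 0 < B x x + s * P x x := by
  obtain ⟨δ, hδ, hcoer⟩ := B.exists_pos_mul_sq_norm_le_apply_self hB
  obtain ⟨M, hM, hbound⟩ := P.exists_abs_apply_self_le_mul_sq_norm
  refine ⟨δ / (M + 1), by positivity, fun s hs x hx => ?_⟩
  have hsM : |s| * M < δ := by
    rw [lt_div_iff₀ (by positivity)] at hs
    nlinarith [abs_nonneg s]
  have hx2 : 0 < ‖x‖ ^ 2 := by positivity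
  have hsP : |s * P x x| ≤ |s| * (M * ‖x‖ ^ 2) := by
    rw [abs_mul]
    exact mul_le_mul_of_nonneg_left (hbound x) (abs_nonneg s)
  nlinarith [hcoer x, mul_lt_mul_of_pos_right hsM hx2, neg_abs_le (s * P x x)]

end LinearMap

theorem stmt8_general (l m : ℕ)
    (h c HV : EuclideanSpace ℝ (Fin l) →ₗ[ℝ] EuclideanSpace ℝ (Fin l) →ₗ[ℝ] ℝ)
    (hposdef : ∀ x, x ≠ 0 → 0 < h x x - c x x)
    (a : Fin m → (EuclideanSpace ℝ (Fin l) →ₗ[ℝ] ℝ)) (z : Fin m → ℂ)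
    (hz : ∀ j, ‖z j‖ = 1)
    (hsum : ∀ x y, ∑ j, a j x * a j y = 2 * c x y) :
    ∃ ε > 0, ∀ s : ℝ, |s| < ε → ∀ t : ℝ, -1 < t → t ≤ 0 →
      ∀ ξ, (∀ η, ((h ξ η + c ξ η + s * HV ξ η : ℝ) : ℂ)
          - (t : ℂ) * ∑ j, (z j / (1 + (t : ℂ) * z j)) * ((a j ξ : ℝ) : ℂ) * ((a j η : ℝ) : ℂ)
            = 0) → ξ = 0 := by
  obtain ⟨ε, hε, hpos⟩ :=
    (h - c).exists_pos_apply_self_add_mul_of_pos HV (by simpa using hposdef)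
  refine ⟨ε, hε, fun s hs t ht₁ ht₀ ξ hξ => ?_⟩
  by_contra hne
  have hre : h ξ ξ + c ξ ξ + s * HV ξ ξ
      - t * ∑ j, (z j / (1 + t * z j)).re * a j ξ ^ 2 = 0 := by
    simpa [Complex.re_sum, Complex.re_mul_ofReal, Complex.re_ofReal_mul, sq, mul_assoc]
      using congrArg Complex.re (hξ ξ)
  have hroots := neg_sum_sq_le_neg_mul_sum_mul_sq univ ht₁.le ht₀ (x := fun j => a j ξ)
    fun j _ => Complex.neg_one_le_re_div_one_add_ofReal_mul (hz j) ht₁.le ht₀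
  have hc : ∑ j, a j ξ ^ 2 = 2 * c ξ ξ := by simpa [sq] using hsum ξ ξ
  have hpert := hpos s hs ξ hne
  simp only [LinearMap.sub_apply] at hpert
  linarith

theorem stmt8 (l m : ℕ)
    (h c HV : EuclideanSpace ℝ (Fin l) →ₗ[ℝ] EuclideanSpace ℝ (Fin l) →ₗ[ℝ] ℝ)
    (hhs : ∀ x y, h x y = h y x) (hcs : ∀ x y, c x y = c y x)
    (hHVs : ∀ x y, HV x y = HV y x)
    (hposdef : ∀ x, x ≠ 0 → 0 < h x x - c x x) (hcpsd : ∀ x, 0 ≤ c x x)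
    (a : Fin m → (EuclideanSpace ℝ (Fin l) →ₗ[ℝ] ℝ)) (z : Fin m → ℂ)
    (hz : ∀ j, ‖z j‖ = 1)
    (hsum : ∀ x y, ∑ j, a j x * a j y = 2 * c x y) :
    ∃ ε > 0, ∀ s : ℝ, |s| < ε → ∀ t : ℝ, -1 < t → t ≤ 0 →
      ∀ ξ, (∀ η, ((h ξ η + c ξ η + s * HV ξ η : ℝ) : ℂ)
          - (t : ℂ) * ∑ j, (z j / (1 + (t : ℂ) * z j)) * ((a j ξ : ℝ) : ℂ) * ((a j η : ℝ) : ℂ)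
            = 0) → ξ = 0 :=
  stmt8_general l m h c HV hposdef a z hz hsum
end

section
/- For a unit complex number u ≠ ±1 and real t, as t → -1 one has the limits: (1 + t·u)/(1 - u) → 1, and for a smooth path f_t = exp(x·ξ_1 + O(x^2)) with x = √(t+1) approaching a point where e^β = 1 with β(ξ_1) ≠ 0, the combination e^β(f_t)/(1 + t·e^β(f_t)) + e^{-β}(f_t)/(1 + t·e^{-β}(f_t)) converges to -1 - 2/β(ξ_1)^2. -/
open Filter Asymptotics Topology

/-!
Part (b) only sees the first-order behaviour of `w` at `0`: since `r = O(x²)`, the path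
`w x = exp (x b + r x)` satisfies `w 0 = 1` and `w' 0 = b`. Writing `w x - 1 = x q x`, so that
`q x → b`, both denominators `1 + t w = x (x w - q)` and `1 + t w⁻¹ = x (q + x) / w` vanish to
first order in `x`, and the factors of `x` cancel: the sum equals
`(q² + 2 w) / ((x w - q) (q + x))`, which tends to `(b² + 2) / (-b²)`.
-/

theorem tendsto_one_add_mul_div_one_sub {u : ℂ} (hu : u ≠ 1) :
    Tendsto (fun t : ℝ => (1 + (t : ℂ) * u) / (1 - u)) (𝓝 (-1)) (𝓝 1) := by
  have h := ((Complex.continuous_ofReal.tendsto (-1)).mul_const u).const_add 1 |>.div_const (1 - u)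
  convert h using 2
  push_cast
  rw [neg_one_mul, ← sub_eq_add_neg, div_self (sub_ne_zero.mpr hu.symm)]

theorem Asymptotics.IsBigO.hasDerivAt_zero_of_sq {E : Type*} [NormedAddCommGroup E]
    [NormedSpace ℝ E] {r : ℝ → E} (hr : r =O[𝓝 0] fun x : ℝ => x ^ 2) : HasDerivAt r 0 0 := by
  have hr' : r =O[𝓝 0] fun x : ℝ => ‖x - 0‖ ^ 2 := by
    simpa only [sub_zero, Real.norm_eq_abs, sq_abs] using hr
  simpa using (hr'.hasFDerivAt (𝕜 := ℝ) one_lt_two).hasDerivAt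

theorem div_one_add_mul_add_inv_div_one_add_mul_inv {K : Type*} [Field K] {x w q : K}
    (hx : x ≠ 0) (hw : w ≠ 0) (hwq : w - 1 = x * q) (h₁ : x * w - q ≠ 0) (h₂ : q + x ≠ 0) :
    w / (1 + (x ^ 2 - 1) * w) + w⁻¹ / (1 + (x ^ 2 - 1) * w⁻¹) =
      (q ^ 2 + 2 * w) / ((x * w - q) * (q + x)) := by
  have e₁ : 1 + (x ^ 2 - 1) * w = x * (x * w - q) := by linear_combination -hwq
  have e₂ : 1 + (x ^ 2 - 1) * w⁻¹ = x * (q + x) / w := by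
    field_simp
    linear_combination hwq
  calc w / (1 + (x ^ 2 - 1) * w) + w⁻¹ / (1 + (x ^ 2 - 1) * w⁻¹)
      = (w * (q + x) + (x * w - q)) / (x * ((x * w - q) * (q + x))) := by
        rw [e₁, e₂]
        rw [mul_comm x w] at h₁ ⊢
        field_simp
    _ = x * (q ^ 2 + 2 * w) / (x * ((x * w - q) * (q + x))) := by
        congr 1
        linear_combination q * hwq
    _ = (q ^ 2 + 2 * w) / ((x * w - q) * (q + x)) := mul_div_mul_left _ _ hx

theorem tendsto_div_one_add_mul_add_inv_div_of_hasDerivAt {w : ℝ → ℂ} {b : ℂ}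
    (hw : HasDerivAt w b 0) (hw₀ : w 0 = 1) (hb : b ≠ 0) :
    Tendsto (fun x : ℝ =>
        w x / (1 + ((x : ℂ) ^ 2 - 1) * w x) + (w x)⁻¹ / (1 + ((x : ℂ) ^ 2 - 1) * (w x)⁻¹))
      (𝓝[≠] 0) (𝓝 (-1 - 2 / b ^ 2)) := by
  set q := slope w 0
  have hq : Tendsto q (𝓝[≠] 0) (𝓝 b) := hasDerivAt_iff_tendsto_slope.mp hw
  have hwq (x : ℝ) : w x - 1 = x * q x := by
    simpa [hw₀, Complex.real_smul] using (sub_smul_slope w 0 x).symm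
  have hw₁ : Tendsto w (𝓝[≠] 0) (𝓝 1) :=
    hw₀ ▸ hw.continuousAt.tendsto.mono_left nhdsWithin_le_nhds
  have hx : Tendsto (fun x : ℝ => (x : ℂ)) (𝓝[≠] 0) (𝓝 0) := by
    simpa using (Complex.continuous_ofReal.tendsto 0).mono_left nhdsWithin_le_nhds
  have hden₁ := (hx.mul hw₁).sub hq
  have hden₂ := hq.add hx
  simp only [zero_mul, zero_sub, add_zero] at hden₁ hden₂
  have hlim := ((hq.pow 2).add (hw₁.const_mul 2)).div (hden₁.mul hden₂)
    (mul_ne_zero (neg_ne_zero.mpr hb) hb)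
  rw [show (b ^ 2 + 2 * 1) / (-b * b) = -1 - 2 / b ^ 2 by field_simp; ring] at hlim
  refine hlim.congr' ?_
  filter_upwards [self_mem_nhdsWithin, hw₁.eventually_ne one_ne_zero,
    hden₁.eventually_ne (neg_ne_zero.mpr hb), hden₂.eventually_ne hb] with x hx₀ hwx h₁ h₂
  exact (div_one_add_mul_add_inv_div_one_add_mul_inv (Complex.ofReal_ne_zero.mpr hx₀) hwx
    (hwq x) h₁ h₂).symm

theorem stmt9 (b : ℝ) (hb : b ≠ 0) (w r : ℝ → ℂ)
    (hw : ∀ x, w x = Complex.exp (x * b + r x))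
    (hr : r =O[nhds (0 : ℝ)] fun x => (x : ℝ) ^ 2) :
    (∀ u : ℂ, ‖u‖ = 1 → u ≠ 1 → u ≠ -1 →
      Tendsto (fun t : ℝ => (1 + (t : ℂ) * u) / (1 - u)) (nhds (-1)) (nhds 1)) ∧
    Tendsto (fun x : ℝ =>
        w x / (1 + ((x : ℂ) ^ 2 - 1) * w x) + (w x)⁻¹ / (1 + ((x : ℂ) ^ 2 - 1) * (w x)⁻¹))
      (nhdsWithin (0 : ℝ) {0}ᶜ) (nhds (-1 - 2 / (b : ℂ) ^ 2)) := by
  refine ⟨fun u _ hu₁ _ => tendsto_one_add_mul_div_one_sub hu₁, ?_⟩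
  have hr₀ : r 0 = 0 := hr.eq_zero_imp.self_of_nhds (zero_pow two_ne_zero)
  have hw' : HasDerivAt w b 0 := by
    rw [funext hw]
    simpa [hr₀] using (((hasDerivAt_id (0 : ℝ)).ofReal_comp.mul_const (b : ℂ)).add
      hr.hasDerivAt_zero_of_sq).cexp
  exact tendsto_div_one_add_mul_add_inv_div_of_hasDerivAt hw' (by simp [hw, hr₀])
    (Complex.ofReal_ne_zero.mpr hb)
end
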